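/- arXiv:1303.7327 — 4 statements merged into one kernel-verified Lean document; each statement's English description precedes it below -/
import Mathlib

section
/- Let σ be a consistent permutation, φ a modal CNF formula, and M, M' pointed Kripke models such that M ,→σ M'. Then M ⊨ φ if and only if M' ⊨ σ(φ). -/
namespace ModalSym

inductive Lit (Atom : Type) : Type
  | pos (a : Atom) : Lit Atom
  | neg (a : Atom) : Lit Atom
  deriving DecidableEq

namespace Lit
def flip {Atom : Type} : Lit Atom → Lit Atom
  | pos a => neg a
  | neg a => pos a
def atom {Atom : Type} : Lit Atom → Atom
  | pos a => a
  | neg a => a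
end Lit

/-- A permutation `σ` of literals is consistent when it commutes with negation. -/
def Consistent {Atom : Type} (σ : Lit Atom → Lit Atom) : Prop :=
  ∀ l, σ l.flip = (σ l).flip

/-- Modal CNF clauses of modal depth at most `n`: a clause is a finite set whose
elements are literals or modal literals `□ₘ C` / `¬□ₘ C` (`Bool` gives the polarity,
`true` for `□ₘ C`). -/
@[reducible] def ClauseT (Atom Mod : Type) : ℕ → Type
  | 0 => Finset (Lit Atom)
  | n+1 => Finset (Lit Atom ⊕ Bool × Mod × ClauseT Atom Mod n)

instance instDecEqClauseT {Atom Mod : Type} [DecidableEq Atom] [DecidableEq Mod] :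
    ∀ n, DecidableEq (ClauseT Atom Mod n)
  | 0 => inferInstanceAs (DecidableEq (Finset (Lit Atom)))
  | n+1 =>
    letI := instDecEqClauseT (Atom := Atom) (Mod := Mod) n
    inferInstanceAs (DecidableEq (Finset (Lit Atom ⊕ Bool × Mod × ClauseT Atom Mod n)))

/-- A modal CNF formula (of modal depth at most `n`): a finite set of clauses. -/
@[reducible] def FormT (Atom Mod : Type) (n : ℕ) : Type := Finset (ClauseT Atom Mod n)

/-- A pointed Kripke model. -/
structure KModel (Atom Mod : Type) : Type 1 where
  W : Type
  pt : W
  V : W → Set Atom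
  R : Mod → W → W → Prop

def satLit {Atom : Type} (S : Set Atom) : Lit Atom → Prop
  | .pos a => a ∈ S
  | .neg a => a ∉ S

def satClause {Atom Mod : Type} (M : KModel Atom Mod) :
    ∀ n, ClauseT Atom Mod n → M.W → Prop
  | 0, C, v => ∃ l ∈ C, satLit (M.V v) l
  | n+1, C, v => ∃ e ∈ C,
      match e with
      | Sum.inl l => satLit (M.V v) l
      | Sum.inr (b, m, C') =>
          cond b (∀ u, M.R m v u → satClause M n C' u)
                 (¬ ∀ u, M.R m v u → satClause M n C' u)

/-- `M ⊨ φ`. -/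
def satForm {Atom Mod : Type} (M : KModel Atom Mod) {n : ℕ} (φ : FormT Atom Mod n) : Prop :=
  ∀ C ∈ φ, satClause M n C M.pt

/-- `L_S`, the complete consistent set of literals generated by `S ⊆ Atom`. -/
def genLits {Atom : Type} (S : Set Atom) : Set (Lit Atom) := {l | satLit S l}

def permClause {Atom Mod : Type} [DecidableEq Atom] [DecidableEq Mod]
    (σ : Lit Atom → Lit Atom) : ∀ n, ClauseT Atom Mod n → ClauseT Atom Mod n
  | 0, C => C.image σ
  | n+1, C => C.image fun e =>
      match e with
      | Sum.inl l => Sum.inl (σ l)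
      | Sum.inr (b, m, C') => Sum.inr (b, m, permClause σ n C')

/-- The action `σ(φ)` of a permutation of literals on a modal CNF formula. -/
def permForm {Atom Mod : Type} [DecidableEq Atom] [DecidableEq Mod]
    (σ : Lit Atom → Lit Atom) {n : ℕ} (φ : FormT Atom Mod n) : FormT Atom Mod n :=
  φ.image (permClause σ n)

/-- The permuted model `σ(M)`, with `V'(v) = σ(L_{V(v)}) ∩ Atom`. -/
def permModel {Atom Mod : Type} (σ : Lit Atom → Lit Atom) (M : KModel Atom Mod) :
    KModel Atom Mod where
  W := M.W
  pt := M.pt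
  V := fun v => {a | Lit.pos a ∈ σ '' genLits (M.V v)}
  R := M.R

def IsBisim {Atom Mod : Type} (M M' : KModel Atom Mod) (Z : M.W → M'.W → Prop) : Prop :=
  Z M.pt M'.pt ∧
  (∀ v v', Z v v' → ∀ a, a ∈ M.V v ↔ a ∈ M'.V v') ∧
  (∀ v v' m u, Z v v' → M.R m v u → ∃ u', M'.R m v' u' ∧ Z u u') ∧
  (∀ v v' m u', Z v v' → M'.R m v' u' → ∃ u, M.R m v u ∧ Z u u')

def Bisimilar {Atom Mod : Type} (M M' : KModel Atom Mod) : Prop := ∃ Z, IsBisim M M' Z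

def IsSigmaSim {Atom Mod : Type} (σ : Lit Atom → Lit Atom) (M M' : KModel Atom Mod)
    (Z : M.W → M'.W → Prop) : Prop :=
  Z M.pt M'.pt ∧
  (∀ v v', Z v v' → ∀ l, l ∈ genLits (M.V v) ↔ σ l ∈ genLits (M'.V v')) ∧
  (∀ v v' m u, Z v v' → M.R m v u → ∃ u', M'.R m v' u' ∧ Z u u') ∧
  (∀ v v' m u', Z v v' → M'.R m v' u' → ∃ u, M.R m v u ∧ Z u u')

/-- `M ,→σ M'`. -/
def SigmaSim {Atom Mod : Type} (σ : Lit Atom → Lit Atom) (M M' : KModel Atom Mod) : Prop :=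
  ∃ Z, IsSigmaSim σ M M' Z

/-- `IsPathFrom M v p`: `p` is a valid path (list of (modality, state) steps) starting at `v`. -/
def IsPathFrom {Atom Mod : Type} (M : KModel Atom Mod) : M.W → List (Mod × M.W) → Prop
  | _, [] => True
  | v, s :: rest => M.R s.1 v s.2 ∧ IsPathFrom M s.2 rest

def pathLast {Atom Mod : Type} (M : KModel Atom Mod) : M.W → List (Mod × M.W) → M.W
  | v, [] => v
  | _, s :: rest => pathLast M s.2 rest

/-- A tree model: every state is the last state of exactly one rooted path. -/
def IsTree {Atom Mod : Type} (M : KModel Atom Mod) : Prop :=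
  ∀ v : M.W, ∃! p : List (Mod × M.W), IsPathFrom M M.pt p ∧ pathLast M M.pt p = v

/-- The depth of a state: the (minimal) length of a rooted path leading to it. -/
noncomputable def depth {Atom Mod : Type} (M : KModel Atom Mod) (v : M.W) : ℕ :=
  sInf {d | ∃ p, IsPathFrom M M.pt p ∧ pathLast M M.pt p = v ∧ p.length = d}

/-- The unravelling `T(M)`. -/
def unravel {Atom Mod : Type} (M : KModel Atom Mod) : KModel Atom Mod where
  W := {p : List (Mod × M.W) // IsPathFrom M M.pt p}
  pt := ⟨[], trivial⟩
  V := fun p => M.V (pathLast M M.pt p.1)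
  R := fun m p p' => ∃ v, p'.1 = p.1 ++ [(m, v)]

/-- `head(σ̄)`: the first permutation of the sequence, identity for the empty sequence. -/
def headP {Atom : Type} (σs : List (Lit Atom → Lit Atom)) : Lit Atom → Lit Atom :=
  σs.headD id

def lpermClause {Atom Mod : Type} [DecidableEq Atom] [DecidableEq Mod]
    (σs : List (Lit Atom → Lit Atom)) : ∀ n, ClauseT Atom Mod n → ClauseT Atom Mod n
  | 0, C => C.image (headP σs)
  | n+1, C => C.image fun e =>
      match e with
      | Sum.inl l => Sum.inl (headP σs l)
      | Sum.inr (b, m, C') => Sum.inr (b, m, lpermClause σs.tail n C')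

/-- The action `σ̄(φ)` of a permutation sequence on a modal CNF formula. -/
def lpermForm {Atom Mod : Type} [DecidableEq Atom] [DecidableEq Mod]
    (σs : List (Lit Atom → Lit Atom)) {n : ℕ} (φ : FormT Atom Mod n) : FormT Atom Mod n :=
  φ.image (lpermClause σs n)

/-- The layered permuted model `σ̄(M)` (meaningful on tree models):
at a state of depth `d` the permutation `head(σ̄_{d+1})` is used. -/
noncomputable def lpermModel {Atom Mod : Type} (σs : List (Lit Atom → Lit Atom))
    (M : KModel Atom Mod) : KModel Atom Mod where
  W := M.W
  pt := M.pt
  V := fun v => {a | Lit.pos a ∈ headP (σs.drop (depth M v)) '' genLits (M.V v)}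
  R := M.R

def IsLSim {Atom Mod : Type} (σs : List (Lit Atom → Lit Atom)) (M M' : KModel Atom Mod)
    (Z : ℕ → M.W → M'.W → Prop) : Prop :=
  Z 0 M.pt M'.pt ∧
  (∀ i v v', Z i v v' →
    ∀ l, l ∈ genLits (M.V v) ↔ headP (σs.drop i) l ∈ genLits (M'.V v')) ∧
  (∀ i v v' m u, Z i v v' → M.R m v u → ∃ u', M'.R m v' u' ∧ Z (i+1) u u') ∧
  (∀ i v v' m u', Z i v v' → M'.R m v' u' → ∃ u, M.R m v u ∧ Z (i+1) u u')

/-- `M ,→σ̄ M'`. -/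
def LSim {Atom Mod : Type} (σs : List (Lit Atom → Lit Atom)) (M M' : KModel Atom Mod) : Prop :=
  ∃ Z, IsLSim σs M M' Z

/-- `Mod_C(φ)`: the models in the class `𝒞` satisfying `φ`. -/
def ModC {Atom Mod : Type} (𝒞 : Set (KModel Atom Mod)) {n : ℕ} (φ : FormT Atom Mod n) :
    Set (KModel Atom Mod) := {M ∈ 𝒞 | satForm M φ}

/-- `φ ⊨_C ψ`. -/
def Entails {Atom Mod : Type} (𝒞 : Set (KModel Atom Mod)) {n₁ n₂ : ℕ}
    (φ : FormT Atom Mod n₁) (ψ : FormT Atom Mod n₂) : Prop :=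
  ModC 𝒞 φ ⊆ ModC 𝒞 ψ


namespace IsSigmaSim

variable {Atom Mod : Type} {σ : Lit Atom → Lit Atom} {M M' : KModel Atom Mod}
  {Z : M.W → M'.W → Prop}

theorem satLit_iff (hZ : IsSigmaSim σ M M' Z) {v : M.W} {v' : M'.W} (hvv' : Z v v')
    (l : Lit Atom) : satLit (M.V v) l ↔ satLit (M'.V v') (σ l) :=
  hZ.2.1 v v' hvv' l

theorem forall_rel_iff (hZ : IsSigmaSim σ M M' Z) {P : M.W → Prop} {Q : M'.W → Prop}
    (hPQ : ∀ u u', Z u u' → (P u ↔ Q u')) {v : M.W} {v' : M'.W} (hvv' : Z v v') (m : Mod) :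
    (∀ u, M.R m v u → P u) ↔ ∀ u', M'.R m v' u' → Q u' := by
  constructor
  · intro hP u' hu'
    obtain ⟨u, hu, huu'⟩ := hZ.2.2.2 v v' m u' hvv' hu'
    exact (hPQ u u' huu').1 (hP u hu)
  · intro hQ u hu
    obtain ⟨u', hu', huu'⟩ := hZ.2.2.1 v v' m u hvv' hu
    exact (hPQ u u' huu').2 (hQ u' hu')

theorem satClause_permClause_iff [DecidableEq Atom] [DecidableEq Mod]
    (hZ : IsSigmaSim σ M M' Z) (n : ℕ) :
    ∀ (C : ClauseT Atom Mod n) (v : M.W) (v' : M'.W), Z v v' →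
      (satClause M n C v ↔ satClause M' n (permClause σ n C) v') := by
  induction n with
  | zero =>
    intro C v v' hvv'
    simp only [satClause, permClause, Finset.exists_mem_image]
    exact exists_congr fun l => and_congr_right fun _ => hZ.satLit_iff hvv' l
  | succ n ih =>
    intro C v v' hvv'
    simp only [satClause, permClause, Finset.exists_mem_image]
    refine exists_congr fun e => and_congr_right fun _ => ?_
    rcases e with l | ⟨b, m, C'⟩
    · exact hZ.satLit_iff hvv' l
    · have hbox := hZ.forall_rel_iff (ih C') hvv' m
      cases b
      · exact not_congr hbox
      · exact hbox

end IsSigmaSim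

theorem sigmaSim_sat_iff_general {Atom Mod : Type}
    [DecidableEq Atom] [DecidableEq Mod]
    (σ : Lit Atom → Lit Atom)
    {n : ℕ} (φ : FormT Atom Mod n)
    (M M' : KModel Atom Mod) (h : SigmaSim σ M M') :
    satForm M φ ↔ satForm M' (permForm σ φ) := by
  obtain ⟨Z, hZ⟩ := h
  simp only [satForm, permForm, Finset.forall_mem_image]
  exact forall₂_congr fun C _ => hZ.satClause_permClause_iff n C M.pt M'.pt hZ.1

/-- a `σ`-simulation transfers `φ` to `σ(φ)`. -/
theorem sigmaSim_sat_iff {Atom Mod : Type} [Countable Atom] [Countable Mod]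
    [DecidableEq Atom] [DecidableEq Mod]
    (σ : Lit Atom → Lit Atom) (hbij : Function.Bijective σ) (hcons : Consistent σ)
    {n : ℕ} (φ : FormT Atom Mod n)
    (M M' : KModel Atom Mod) (h : SigmaSim σ M M') :
    satForm M φ ↔ satForm M' (permForm σ φ) :=
  sigmaSim_sat_iff_general σ φ M M' h

end ModalSym
end

section
/- Let σ be a consistent permutation, M a pointed Kripke model and φ a modal CNF formula. Then M ⊨ φ if and only if σ(M) ⊨ σ(φ). -/
namespace ModalSym

/-!
A consistent permutation `σ` maps the complete consistent set of literals `L_{V(v)}` onto a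
complete consistent set, which is then necessarily `L_{V'(v)}`, the one generated by its atoms.
So `σ(l)` holds at `v` in `σ(M)` exactly when `l` holds at `v` in `M`; as `σ(M)` has the frame of
`M`, induction on the modal depth transports this to clauses.
-/

lemma satLit_flip {Atom : Type} (S : Set Atom) (l : Lit Atom) :
    satLit S l.flip ↔ ¬ satLit S l := by
  cases l <;> simp [satLit, Lit.flip]

lemma flip_mem_image_genLits_iff {Atom : Type} {σ : Lit Atom → Lit Atom}
    (hσ : Function.Bijective σ) (hcons : Consistent σ) (S : Set Atom) (k : Lit Atom) :
    k.flip ∈ σ '' genLits S ↔ k ∉ σ '' genLits S := by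
  obtain ⟨l, rfl⟩ := hσ.2 k
  rw [← hcons, hσ.1.mem_set_image, hσ.1.mem_set_image]
  exact satLit_flip S l

lemma genLits_permModel_V {Atom Mod : Type} {σ : Lit Atom → Lit Atom}
    (hσ : Function.Bijective σ) (hcons : Consistent σ) (M : KModel Atom Mod) (v : M.W) :
    genLits ((permModel σ M).V v) = σ '' genLits (M.V v) := by
  ext (a | a)
  · rfl
  · exact (flip_mem_image_genLits_iff hσ hcons (M.V v) (.pos a)).symm

lemma satLit_permModel {Atom Mod : Type} {σ : Lit Atom → Lit Atom}
    (hσ : Function.Bijective σ) (hcons : Consistent σ) (M : KModel Atom Mod) (v : M.W)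
    (l : Lit Atom) :
    satLit ((permModel σ M).V v) (σ l) ↔ satLit (M.V v) l := by
  change σ l ∈ genLits _ ↔ l ∈ genLits _
  rw [genLits_permModel_V hσ hcons, hσ.1.mem_set_image]

lemma satClause_permModel_permClause {Atom Mod : Type} [DecidableEq Atom] [DecidableEq Mod]
    {σ : Lit Atom → Lit Atom} (hσ : Function.Bijective σ) (hcons : Consistent σ)
    (M : KModel Atom Mod) :
    ∀ n (C : ClauseT Atom Mod n) (v : M.W),
      satClause (permModel σ M) n (permClause σ n C) v ↔ satClause M n C v
  | 0, C, v => by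
    simp only [satClause, permClause, Finset.exists_mem_image, satLit_permModel hσ hcons]
  | n + 1, C, v => by
    simp only [satClause, permClause, Finset.exists_mem_image]
    refine exists_congr fun e => and_congr_right fun _ => ?_
    rcases e with l | ⟨_ | _, m, C'⟩
    · exact satLit_permModel hσ hcons M v l
    · exact not_congr <| forall₂_congr fun u _ =>
        satClause_permModel_permClause hσ hcons M n C' u
    · exact forall₂_congr fun u _ => satClause_permModel_permClause hσ hcons M n C' u

theorem sat_iff_permModel_permForm_general {Atom Mod : Type}
    [DecidableEq Atom] [DecidableEq Mod]
    (σ : Lit Atom → Lit Atom) (hbij : Function.Bijective σ) (hcons : Consistent σ)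
    (M : KModel Atom Mod) {n : ℕ} (φ : FormT Atom Mod n) :
    satForm M φ ↔ satForm (permModel σ M) (permForm σ φ) := by
  simp only [satForm, permForm, Finset.forall_mem_image]
  exact forall₂_congr fun C _ => (satClause_permModel_permClause hbij hcons M n C M.pt).symm

/-- `M ⊨ φ` iff `σ(M) ⊨ σ(φ)`. -/
theorem sat_iff_permModel_permForm {Atom Mod : Type} [Countable Atom] [Countable Mod]
    [DecidableEq Atom] [DecidableEq Mod]
    (σ : Lit Atom → Lit Atom) (hbij : Function.Bijective σ) (hcons : Consistent σ)
    (M : KModel Atom Mod) {n : ℕ} (φ : FormT Atom Mod n) :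
    satForm M φ ↔ satForm (permModel σ M) (permForm σ φ) :=
  sat_iff_permModel_permForm_general σ hbij hcons M φ

end ModalSym
end

section
/- Let σ be a consistent permutation of finite order (σⁿ is the identity for some n ≥ 1) that is a symmetry of the modal CNF formula φ, and let C be a class of pointed Kripke models closed under σ. Then Mod_C(φ) = σ(Mod_C(φ)). -/
namespace ModalSym

/-!
A consistent symmetry `σ` maps models of `φ` to models of `σ(φ) = φ`, since `σ(M)` satisfies
`σ(l)` exactly where `M` satisfies `l`; so `M ↦ σ(M)` maps `Mod_C(φ)` into itself. Acting on
models is compatible with composition of permutations, so `σ(·)` has finite order on models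
as well, and a self-map of finite order that sends a set into itself maps it onto itself.
-/

theorem _root_.Function.bijective_of_iterate_eq_id {α : Type*} {f : α → α} {k : ℕ} (hk : 1 ≤ k)
    (h : f^[k] = id) : Function.Bijective f := by
  obtain ⟨j, rfl⟩ := Nat.exists_eq_add_of_le' hk
  refine Function.bijective_iff_has_inverse.mpr ⟨f^[j], fun x => ?_, fun x => ?_⟩
  · exact (Function.iterate_succ_apply f j x).symm.trans (congrFun h x)
  · exact (Function.iterate_succ_apply' f j x).symm.trans (congrFun h x)

theorem _root_.Set.MapsTo.image_eq_self_of_iterate_eq_id {α : Type*} {f : α → α} {s : Set α}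
    (hf : Set.MapsTo f s s) {k : ℕ} (hk : 1 ≤ k) (h : f^[k] = id) : f '' s = s := by
  refine hf.image_subset.antisymm fun x hx => ?_
  obtain ⟨j, rfl⟩ := Nat.exists_eq_add_of_le' hk
  exact ⟨f^[j] x, hf.iterate j hx, (Function.iterate_succ_apply' f j x).symm.trans (congrFun h x)⟩

section

variable {Atom Mod : Type}

theorem Lit.flip_mem_genLits {S : Set Atom} {l : Lit Atom} :
    l.flip ∈ genLits S ↔ l ∉ genLits S := by
  cases l <;> simp [Lit.flip, genLits, satLit]

theorem genLits_V_permModel {σ : Lit Atom → Lit Atom} (hσ : Function.Bijective σ)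
    (hcons : Consistent σ) (M : KModel Atom Mod) (v : M.W) :
    genLits ((permModel σ M).V v) = σ '' genLits (M.V v) := by
  ext l
  obtain ⟨x, rfl⟩ := hσ.surjective l
  cases hx : σ x with
  | pos a => rfl
  | neg a =>
    have hflip : σ x.flip = Lit.pos a := by rw [hcons, hx]; rfl
    change Lit.pos a ∉ σ '' genLits (M.V v) ↔ _
    rw [← hx, ← hflip, hσ.injective.mem_set_image, hσ.injective.mem_set_image,
      Lit.flip_mem_genLits, not_not]

theorem satLit_V_permModel {σ : Lit Atom → Lit Atom} (hσ : Function.Bijective σ)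
    (hcons : Consistent σ) (M : KModel Atom Mod) (v : M.W) (l : Lit Atom) :
    satLit ((permModel σ M).V v) (σ l) ↔ satLit (M.V v) l :=
  (Set.ext_iff.mp (genLits_V_permModel hσ hcons M v) (σ l)).trans hσ.injective.mem_set_image

theorem permModel_id (M : KModel Atom Mod) : permModel id M = M := by
  cases M
  simp only [permModel, Set.image_id]
  rfl

theorem permModel_permModel {σ τ : Lit Atom → Lit Atom} (hτ : Function.Bijective τ)
    (hcons : Consistent τ) (M : KModel Atom Mod) :
    permModel σ (permModel τ M) = permModel (σ ∘ τ) M := by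
  have hgen := genLits_V_permModel hτ hcons M
  cases M
  simp only [permModel, KModel.mk.injEq, heq_eq_eq, true_and, and_true] at hgen ⊢
  funext v
  rw [hgen, Set.image_image]
  rfl

theorem permModel_iterate {σ : Lit Atom → Lit Atom} (hσ : Function.Bijective σ)
    (hcons : Consistent σ) (j : ℕ) (M : KModel Atom Mod) :
    (permModel σ)^[j] M = permModel σ^[j] M := by
  induction j generalizing M with
  | zero => exact (permModel_id M).symm
  | succ j ih =>
    rw [Function.iterate_succ_apply, ih, permModel_permModel hσ hcons, Function.iterate_succ]

variable [DecidableEq Atom] [DecidableEq Mod]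

theorem satClause_permClause {σ : Lit Atom → Lit Atom} (hσ : Function.Bijective σ)
    (hcons : Consistent σ) (M : KModel Atom Mod) (n : ℕ) (C : ClauseT Atom Mod n) (v : M.W) :
    satClause (permModel σ M) n (permClause σ n C) v ↔ satClause M n C v := by
  induction n generalizing v with
  | zero =>
    simp only [satClause, permClause, Finset.exists_mem_image, satLit_V_permModel hσ hcons]
  | succ n ih =>
    simp only [satClause, permClause, Finset.exists_mem_image]
    refine exists_congr fun e => and_congr_right fun _ => ?_
    rcases e with l | ⟨_ | _, m, C'⟩
    · exact satLit_V_permModel hσ hcons M v l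
    · exact not_congr (forall₂_congr fun u _ => ih C' u)
    · exact forall₂_congr fun u _ => ih C' u

theorem satForm_permForm {σ : Lit Atom → Lit Atom} (hσ : Function.Bijective σ)
    (hcons : Consistent σ) (M : KModel Atom Mod) {n : ℕ} (φ : FormT Atom Mod n) :
    satForm (permModel σ M) (permForm σ φ) ↔ satForm M φ := by
  simp only [satForm, permForm, Finset.forall_mem_image]
  exact forall₂_congr fun C _ => satClause_permClause hσ hcons M n C M.pt

end

theorem modC_eq_perm_modC_general {Atom Mod : Type}
    [DecidableEq Atom] [DecidableEq Mod]
    (σ : Lit Atom → Lit Atom) (hcons : Consistent σ)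
    (hord : ∃ k : ℕ, 1 ≤ k ∧ σ^[k] = id)
    {n : ℕ} (φ : FormT Atom Mod n) (hsym : permForm σ φ = φ)
    (𝒞 : Set (KModel Atom Mod)) (hclosed : ∀ M ∈ 𝒞, permModel σ M ∈ 𝒞) :
    ModC 𝒞 φ = permModel σ '' ModC 𝒞 φ := by
  obtain ⟨k, hk, hσk⟩ := hord
  have hσ : Function.Bijective σ := Function.bijective_of_iterate_eq_id hk hσk
  have hperm_k : (permModel σ)^[k] = (id : KModel Atom Mod → KModel Atom Mod) := by
    funext M
    rw [permModel_iterate hσ hcons, hσk, permModel_id, id]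
  have hmaps : Set.MapsTo (permModel σ) (ModC 𝒞 φ) (ModC 𝒞 φ) := fun M ⟨hM𝒞, hMφ⟩ =>
    ⟨hclosed M hM𝒞, hsym ▸ (satForm_permForm hσ hcons M φ).mpr hMφ⟩
  exact (hmaps.image_eq_self_of_iterate_eq_id hk hperm_k).symm

/-- for a finite-order consistent symmetry `σ` of `φ` and a class `𝒞`
closed under `σ`, `Mod_𝒞(φ) = σ(Mod_𝒞(φ))`. -/
theorem modC_eq_perm_modC {Atom Mod : Type} [Countable Atom] [Countable Mod]
    [DecidableEq Atom] [DecidableEq Mod]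
    (σ : Lit Atom → Lit Atom) (hbij : Function.Bijective σ) (hcons : Consistent σ)
    (hord : ∃ k : ℕ, 1 ≤ k ∧ σ^[k] = id)
    {n : ℕ} (φ : FormT Atom Mod n) (hsym : permForm σ φ = φ)
    (𝒞 : Set (KModel Atom Mod)) (hclosed : ∀ M ∈ 𝒞, permModel σ M ∈ 𝒞) :
    ModC 𝒞 φ = permModel σ '' ModC 𝒞 φ :=
  modC_eq_perm_modC_general σ hcons hord φ hsym 𝒞 hclosed

end ModalSym
end

section
/- Let σ̄ be a consistent permutation sequence and M, M' pointed Kripke models such that M ,→σ̄ M'. Then for every modal CNF formula φ, M ⊨ φ if and only if M' ⊨ σ̄(φ). -/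
/-! Strengthen the claim to every level `i`: if `Z i v v'`, then a clause `C` holds at `v` iff
`σ̄ᵢ(C)` holds at `v'`, by induction on the modal depth of `C`. Literals transfer by harmony;
since the tail of `σ̄ᵢ` is `σ̄ᵢ₊₁`, the clause under a box is acted on by `σ̄ᵢ₊₁`, and zig and zag
carry the box through `Z (i + 1)`. -/

namespace ModalSym

namespace IsLSim

variable {Atom Mod : Type} {σs : List (Lit Atom → Lit Atom)} {M M' : KModel Atom Mod}
  {Z : ℕ → M.W → M'.W → Prop}

theorem satLit_iff (hZ : IsLSim σs M M' Z) {i : ℕ} {v : M.W} {v' : M'.W} (hv : Z i v v')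
    (l : Lit Atom) : satLit (M.V v) l ↔ satLit (M'.V v') (headP (σs.drop i) l) :=
  hZ.2.1 i v v' hv l

theorem forall_succ_iff (hZ : IsLSim σs M M' Z) {i : ℕ} {v : M.W} {v' : M'.W}
    (hv : Z i v v') {P : M.W → Prop} {P' : M'.W → Prop}
    (hP : ∀ u u', Z (i + 1) u u' → (P u ↔ P' u')) (m : Mod) :
    (∀ u, M.R m v u → P u) ↔ ∀ u', M'.R m v' u' → P' u' := by
  obtain ⟨-, -, hzig, hzag⟩ := hZ
  constructor
  · intro hall u' hu'
    obtain ⟨u, hu, hZu⟩ := hzag i v v' m u' hv hu'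
    exact (hP u u' hZu).mp (hall u hu)
  · intro hall u hu
    obtain ⟨u', hu', hZu⟩ := hzig i v v' m u hv hu
    exact (hP u u' hZu).mpr (hall u' hu')

theorem satClause_iff [DecidableEq Atom] [DecidableEq Mod] (hZ : IsLSim σs M M' Z) :
    ∀ (n : ℕ) (C : ClauseT Atom Mod n) {i : ℕ} {v : M.W} {v' : M'.W}, Z i v v' →
      (satClause M n C v ↔ satClause M' n (lpermClause (σs.drop i) n C) v')
  | 0, C, i, v, v', hv => by
    simp only [satClause, lpermClause, Finset.exists_mem_image]
    exact exists_congr fun l => and_congr_right fun _ => hZ.satLit_iff hv l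
  | n + 1, C, i, v, v', hv => by
    simp only [satClause, lpermClause, Finset.exists_mem_image, List.tail_drop]
    refine exists_congr fun e => and_congr_right fun _ => ?_
    have hbox (m : Mod) (C' : ClauseT Atom Mod n) :=
      hZ.forall_succ_iff hv (fun u u' hu => satClause_iff hZ n C' hu) m
    rcases e with l | ⟨_ | _, m, C'⟩
    · exact hZ.satLit_iff hv l
    · exact (hbox m C').not
    · exact hbox m C'

end IsLSim

theorem lsim_sat_iff_general {Atom Mod : Type}
    [DecidableEq Atom] [DecidableEq Mod]
    (σs : List (Lit Atom → Lit Atom))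
    (M M' : KModel Atom Mod) (h : LSim σs M M') :
    ∀ {n : ℕ} (φ : FormT Atom Mod n), satForm M φ ↔ satForm M' (lpermForm σs φ) := by
  obtain ⟨Z, hZ⟩ := h
  intro n φ
  simp only [satForm, lpermForm, Finset.forall_mem_image]
  exact forall₂_congr fun C _ => by simpa using hZ.satClause_iff n C hZ.1

/-- a `σ̄`-simulation transfers `φ` to `σ̄(φ)`. -/
theorem lsim_sat_iff {Atom Mod : Type} [Countable Atom] [Countable Mod]
    [DecidableEq Atom] [DecidableEq Mod]
    (σs : List (Lit Atom → Lit Atom))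
    (hbij : ∀ σ ∈ σs, Function.Bijective σ) (hcons : ∀ σ ∈ σs, Consistent σ)
    (M M' : KModel Atom Mod) (h : LSim σs M M') :
    ∀ {n : ℕ} (φ : FormT Atom Mod n), satForm M φ ↔ satForm M' (lpermForm σs φ) :=
  lsim_sat_iff_general σs M M' h

end ModalSym
end
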